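/- arXiv:1704.05655 — 3 statements merged into one kernel-verified Lean document; each statement's English description precedes it below -/
import Mathlib

section
/- In a generalized Cops and Robbers game, if it is the Evader's turn to move at position (p_P, q_E) and q_E ≼_i p_P, then the Pursuer has a strategy that guarantees the position enters F after the Pursuer makes at most i more moves. -/
open Classical

/-- A generalized Cops and Robbers game on Pursuer positions `PP` and Evader positions `PE`.
`F` is the set of final positions, `I` the set of allowed start positions, and
`AP`/`AE` give the (nonempty) sets of allowed moves of the Pursuer/Evader from a
non-final position (a move changes only that player's own coordinate). -/
structure GCR (PP PE : Type*) where
  F : PP → PE → Prop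
  I : PP → PE → Prop
  AP : PP → PE → Set PP
  AE : PP → PE → Set PE
  I_nonempty : ∃ p q, I p q
  AP_nonempty : ∀ p q, ¬ F p q → (AP p q).Nonempty
  AE_nonempty : ∀ p q, ¬ F p q → (AE p q).Nonempty

namespace GCR

variable {PP PE : Type*}

/-- The Pursuer's allowed start positions `I_P`. -/
def IP (G : GCR PP PE) (p : PP) : Prop := ∃ q, G.I p q

/-- The Evader's allowed start positions `I_E(p)` against the Pursuer start `p`. -/
def IE (G : GCR PP PE) (p : PP) (q : PE) : Prop := G.I p q

/-- The sequence of relations `≼_i` from Evader positions to Pursuer positions: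
`q ≼_0 p` iff `(p,q) ∈ F`; and for `i ≥ 1`, `q ≼_i p` iff `(p,q) ∈ F` or for every
`x ∈ A_E(p,q)` either `(p,x) ∈ F` or there is `w ∈ A_P(p,x)` with `x ≼_j w` for some `j < i`. -/
def rel (G : GCR PP PE) : ℕ → PE → PP → Prop
  | 0, q, p => G.F p q
  | (i+1), q, p => G.F p q ∨
      ∀ x ∈ G.AE p q, G.F p x ∨ ∃ w ∈ G.AP p x, ∃ j, ∃ _ : j < i + 1, G.rel j x w
  termination_by i _ _ => i
  decreasing_by omega

/-- The stabilized relation `≼`. -/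
def Rel (G : GCR PP PE) (q : PE) (p : PP) : Prop := ∃ i, G.rel i q p

/-- A strategy for the Pursuer: an initial position together with a move for every
finite history of positions (most recent first). -/
structure PStrat (G : GCR PP PE) where
  init : PP
  move : List (PP × PE) → PP

/-- A strategy for the Evader: an initial position (depending on the Pursuer's choice)
together with a move for every finite history of positions (most recent first). -/
structure EStrat (G : GCR PP PE) where
  init : PP → PE
  move : List (PP × PE) → PE

/-- A Pursuer strategy plays allowed moves at every non-final position. -/
def PStrat.MovesValid {G : GCR PP PE} (σ : PStrat G) : Prop :=
  ∀ (h : List (PP × PE)) (c : PP × PE), ¬ G.F c.1 c.2 → σ.move (c :: h) ∈ G.AP c.1 c.2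

/-- An Evader strategy plays allowed moves at every non-final position. -/
def EStrat.MovesValid {G : GCR PP PE} (τ : EStrat G) : Prop :=
  ∀ (h : List (PP × PE)) (c : PP × PE), ¬ G.F c.1 c.2 → τ.move (c :: h) ∈ G.AE c.1 c.2

/-- A valid Pursuer strategy: the initial position is an allowed start position,
and all moves are allowed. -/
def PStrat.Valid {G : GCR PP PE} (σ : PStrat G) : Prop :=
  G.IP σ.init ∧ σ.MovesValid

/-- A valid Evader strategy: the initial position is an allowed response to any allowed
Pursuer start position, and all moves are allowed. -/
def EStrat.Valid {G : GCR PP PE} (τ : EStrat G) : Prop :=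
  (∀ p, G.IP p → G.IE p (τ.init p)) ∧ τ.MovesValid

/-- The play of the game determined by strategies `σ` and `τ`: first both players choose
their start positions, then they move alternately with the Pursuer moving first.
Returns the current position after `n` single moves together with the history so far. -/
def play (G : GCR PP PE) (σ : PStrat G) (τ : EStrat G) : ℕ → (PP × PE) × List (PP × PE)
  | 0 => ((σ.init, τ.init σ.init), [(σ.init, τ.init σ.init)])
  | (n+1) =>
      let s := play G σ τ n
      let nxt := if n % 2 = 0 then (σ.move s.2, s.1.2) else (s.1.1, τ.move s.2)
      (nxt, nxt :: s.2)

/-- The position after `n` single moves of the play determined by `σ` and `τ`. -/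
def pos (G : GCR PP PE) (σ : PStrat G) (τ : EStrat G) (n : ℕ) : PP × PE :=
  (play G σ τ n).1

/-- Play from a given mid-game position `start`; `pFirst = true` means the Pursuer is
next to move. The players move alternately. Returns the current position after `n`
single moves together with the history so far. -/
def playFrom (G : GCR PP PE) (σ : PStrat G) (τ : EStrat G) (start : PP × PE)
    (pFirst : Bool) : ℕ → (PP × PE) × List (PP × PE)
  | 0 => (start, [start])
  | (n+1) =>
      let s := playFrom G σ τ start pFirst n
      let nxt := if (decide (n % 2 = 0)) == pFirst
        then (σ.move s.2, s.1.2) else (s.1.1, τ.move s.2)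
      (nxt, nxt :: s.2)

/-- The position after `n` single moves of the play from state `(start, pFirst)`. -/
def posFrom (G : GCR PP PE) (σ : PStrat G) (τ : EStrat G) (start : PP × PE)
    (pFirst : Bool) (n : ℕ) : PP × PE :=
  (playFrom G σ τ start pFirst n).1

/-- The Pursuer has a winning strategy: a valid strategy such that against every valid
Evader strategy the position eventually belongs to `F`. -/
def PursuerWins (G : GCR PP PE) : Prop :=
  ∃ σ : PStrat G, σ.Valid ∧ ∀ τ : EStrat G, τ.Valid →
    ∃ n, G.F (pos G σ τ n).1 (pos G σ τ n).2

/-- The Evader has a winning strategy: a valid strategy such that against every valid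
Pursuer strategy the position never belongs to `F`. -/
def EvaderWins (G : GCR PP PE) : Prop :=
  ∃ τ : EStrat G, τ.Valid ∧ ∀ σ : PStrat G, σ.Valid →
    ∀ n, ¬ G.F (pos G σ τ n).1 (pos G σ τ n).2

/-! ### The state digraph and its labelling -/

/-- The initial labelling of the state digraph: final states get `0`, all others `∞`.
A state is a position together with a `Bool` which is `true` when the Pursuer is next
to move. -/
noncomputable def labelInit (G : GCR PP PE) : (PP × PE) × Bool → ℕ∞ :=
  fun s => if G.F s.1.1 s.1.2 then 0 else ⊤

/-- One round of updates of the labelling procedure: a non-final Pursuer-to-move state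
gets `1 +` the minimum label over its out-neighbours, and a non-final Evader-to-move
state gets `1 +` the maximum label over its out-neighbours. -/
noncomputable def labelStep (G : GCR PP PE) (f : (PP × PE) × Bool → ℕ∞) :
    (PP × PE) × Bool → ℕ∞ :=
  fun s =>
    if G.F s.1.1 s.1.2 then 0
    else if s.2 then 1 + ⨅ w ∈ G.AP s.1.1 s.1.2, f ((w, s.1.2), false)
    else 1 + ⨆ x ∈ G.AE s.1.1 s.1.2, f ((s.1.1, x), true)

/-- The stable labelling of the state digraph, obtained by repeating the update
procedure until no label changes (the iterates decrease pointwise, so the stable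
labelling is the pointwise infimum of the iterates). -/
noncomputable def label (G : GCR PP PE) (s : (PP × PE) × Bool) : ℕ∞ :=
  ⨅ n : ℕ, (G.labelStep)^[n] G.labelInit s

/-! ### Length of the game -/

/-- The number of moves the Pursuer makes before the position first lies in `F`, in the
play determined by `σ` and `τ` (the Pursuer moves at odd time-steps, so has made
`(n+1)/2` moves by time-step `n`); `⊤` if the position never lies in `F`. -/
noncomputable def captureMoves (G : GCR PP PE) (σ : PStrat G) (τ : EStrat G) : ℕ∞ :=
  ⨅ (n : ℕ) (_ : G.F (pos G σ τ n).1 (pos G σ τ n).2), (((n + 1) / 2 : ℕ) : ℕ∞)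

/-- The length of the game under optimal play: the minimum over valid Pursuer strategies
of the maximum over valid Evader strategies of the number of Pursuer moves made before
the position first lies in `F`. -/
noncomputable def gameLength (G : GCR PP PE) : ℕ∞ :=
  ⨅ (σ : PStrat G) (_ : σ.Valid), ⨆ (τ : EStrat G) (_ : τ.Valid), G.captureMoves σ τ

/-- The quantity `ℓ(p,q)` from Corollary 1. -/
noncomputable def ell (G : GCR PP PE) (p : PP) (q : PE) : ℕ∞ :=
  if G.Rel q p then ⨅ (j : ℕ) (_ : G.rel j q p), (j : ℕ∞)
  else 1 + ⨆ w ∈ G.AP p q, ⨅ (j : ℕ) (_ : G.rel j q w), (j : ℕ∞)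

/-! ### Position independent games -/

/-- A game is position independent (with position digraphs given by out-neighbour maps
`GP` and `GE`) if, from any non-final position, the allowed moves of the Pursuer depend
only on the Pursuer's position and the allowed moves of the Evader depend only on the
Evader's position. -/
def PositionIndependent (G : GCR PP PE) (GP : PP → Set PP) (GE : PE → Set PE) : Prop :=
  ∀ p q, ¬ G.F p q → G.AP p q = GP p ∧ G.AE p q = GE q

/-- A vertex `(p,q)` of the round summary digraph is removable with respect to a set `S`
of vertices. -/
def Removable (G : GCR PP PE) (GP : PP → Set PP) (GE : PE → Set PE)
    (v : PP × PE) (S : Set (PP × PE)) : Prop :=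
  G.F v.1 v.2 ∨ ∀ x ∈ GE v.2, G.F v.1 x ∨ ∃ y ∈ GP v.1, (y, x) ∈ S

/-- A removable vertex ordering of the round summary digraph: a sequence of vertices in
which each element is removable with respect to the set of vertices preceding it, and
there is a Pursuer start position `p ∈ I_P` such that for all `q ∈ I_E(p)` either
`(p,q) ∈ F` or the Pursuer has an allowed move `w` with `(w,q)` in the sequence. -/
def RemovableOrdering (G : GCR PP PE) (GP : PP → Set PP) (GE : PE → Set PE)
    (L : List (PP × PE)) : Prop :=
  (∀ i : Fin L.length, G.Removable GP GE (L.get i)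
      {w | ∃ j : Fin L.length, (j : ℕ) < (i : ℕ) ∧ L.get j = w}) ∧
  ∃ p, G.IP p ∧ ∀ q, G.IE p q → G.F p q ∨ ∃ w ∈ GP p, (w, q) ∈ L

/-!
The Pursuer plays greedily: after the Evader moves to `x`, she moves to a `w` that minimizes the
least `j` with `x ≼_j w`. If `q ≼_k p` holds with the Evader to move and the game does not end
during the next round, the definition of `≼_k` provides such a `w` with `j < k`; so the index
drops every round and reaches `≼_0`, i.e. `F`, within `k` rounds.
-/

noncomputable def greedyMove (G : GCR PP PE) (c : PP × PE) : PP :=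
  if h : ∃ j, ∃ w ∈ G.AP c.1 c.2, G.rel j c.2 w then (Nat.find_spec h).choose
  else if h' : (G.AP c.1 c.2).Nonempty then h'.choose
  else c.1

theorem greedyMove_mem (G : GCR PP PE) {c : PP × PE} (hc : ¬ G.F c.1 c.2) :
    G.greedyMove c ∈ G.AP c.1 c.2 := by
  unfold greedyMove
  split_ifs with h h'
  · exact (Nat.find_spec h).choose_spec.1
  · exact h'.choose_spec
  · exact absurd (G.AP_nonempty c.1 c.2 hc) h'

theorem exists_le_rel_greedyMove (G : GCR PP PE) {c : PP × PE} {w : PP} {j : ℕ}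
    (hw : w ∈ G.AP c.1 c.2) (hj : G.rel j c.2 w) :
    ∃ j' ≤ j, G.rel j' c.2 (G.greedyMove c) := by
  have h : ∃ j, ∃ w ∈ G.AP c.1 c.2, G.rel j c.2 w := ⟨j, w, hw, hj⟩
  refine ⟨Nat.find h, Nat.find_min' h ⟨w, hw, hj⟩, ?_⟩
  rw [greedyMove, dif_pos h]
  exact (Nat.find_spec h).choose_spec.2

/-- The start position `p₀` plays no role in plays from a given position. -/
noncomputable def greedyStrat (G : GCR PP PE) (p₀ : PP) : PStrat G :=
  ⟨p₀, fun l => l.head?.elim p₀ G.greedyMove⟩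

theorem greedyStrat_move_cons (G : GCR PP PE) (p₀ : PP) (c : PP × PE) (l : List (PP × PE)) :
    (G.greedyStrat p₀).move (c :: l) = G.greedyMove c :=
  rfl

theorem greedyStrat_movesValid (G : GCR PP PE) (p₀ : PP) : (G.greedyStrat p₀).MovesValid :=
  fun _ _ hc => G.greedyMove_mem hc

section PlayFrom

variable {G : GCR PP PE} (σ : PStrat G) (τ : EStrat G) (s : PP × PE)

theorem exists_playFrom_snd_eq_cons (b : Bool) (n : ℕ) :
    ∃ t, (playFrom G σ τ s b n).2 = posFrom G σ τ s b n :: t := by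
  cases n <;> exact ⟨_, rfl⟩

theorem posFrom_succ (b : Bool) (n : ℕ) :
    posFrom G σ τ s b (n + 1) =
      if decide (n % 2 = 0) == b then (σ.move (playFrom G σ τ s b n).2, (posFrom G σ τ s b n).2)
      else ((posFrom G σ τ s b n).1, τ.move (playFrom G σ τ s b n).2) :=
  rfl

theorem exists_posFrom_false_two_mul_add_one (m : ℕ) :
    ∃ t, posFrom G σ τ s false (2 * m + 1) =
      ((posFrom G σ τ s false (2 * m)).1, τ.move (posFrom G σ τ s false (2 * m) :: t)) := by
  obtain ⟨t, ht⟩ := exists_playFrom_snd_eq_cons σ τ s false (2 * m)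
  exact ⟨t, by rw [posFrom_succ, ht]; simp⟩

theorem exists_posFrom_false_two_mul_add_two (m : ℕ) :
    ∃ t, posFrom G σ τ s false (2 * (m + 1)) =
      (σ.move (posFrom G σ τ s false (2 * m + 1) :: t), (posFrom G σ τ s false (2 * m + 1)).2) := by
  obtain ⟨t, ht⟩ := exists_playFrom_snd_eq_cons σ τ s false (2 * m + 1)
  exact ⟨t, by rw [Nat.mul_succ, posFrom_succ, ht]; simp [Nat.add_mod]⟩

end PlayFrom

section Greedy

variable (G : GCR PP PE) (p₀ : PP) {τ : EStrat G} (s : PP × PE)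

local notation "pos" => posFrom G (G.greedyStrat p₀) τ s false

theorem exists_rel_lt_greedy_round (hτ : τ.MovesValid) {k m : ℕ}
    (hk : G.rel k (pos (2 * m)).2 (pos (2 * m)).1)
    (hF₀ : ¬ G.F (pos (2 * m)).1 (pos (2 * m)).2)
    (hF₁ : ¬ G.F (pos (2 * m + 1)).1 (pos (2 * m + 1)).2) :
    ∃ j < k, G.rel j (pos (2 * (m + 1))).2 (pos (2 * (m + 1))).1 := by
  obtain ⟨t, h₁⟩ := exists_posFrom_false_two_mul_add_one (G.greedyStrat p₀) τ s m
  obtain ⟨t', h₂⟩ := exists_posFrom_false_two_mul_add_two (G.greedyStrat p₀) τ s m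
  cases k with
  | zero => rw [rel] at hk; exact absurd hk hF₀
  | succ k =>
    rw [rel] at hk
    rw [h₁] at hF₁
    obtain ⟨w, hw, j, hj, hjw⟩ :=
      ((hk.resolve_left hF₀) _ (hτ t _ hF₀)).resolve_left hF₁
    obtain ⟨j', hj', hrel⟩ :=
      G.exists_le_rel_greedyMove (c := pos (2 * m + 1)) (by rwa [h₁]) (by rwa [h₁])
    refine ⟨j', by omega, ?_⟩
    rwa [h₂, greedyStrat_move_cons]

theorem exists_final_posFrom_greedy (hτ : τ.MovesValid) (k m : ℕ)
    (hk : G.rel k (pos (2 * m)).2 (pos (2 * m)).1) :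
    ∃ n ≤ 2 * m + 2 * k, G.F (pos n).1 (pos n).2 := by
  induction k using Nat.strong_induction_on generalizing m with
  | _ k ih =>
  by_cases hF₀ : G.F (pos (2 * m)).1 (pos (2 * m)).2
  · exact ⟨2 * m, by omega, hF₀⟩
  have hk₀ : k ≠ 0 := by rintro rfl; rw [rel] at hk; exact hF₀ hk
  by_cases hF₁ : G.F (pos (2 * m + 1)).1 (pos (2 * m + 1)).2
  · exact ⟨2 * m + 1, by omega, hF₁⟩
  obtain ⟨j, hj, hrel⟩ := exists_rel_lt_greedy_round G p₀ s hτ hk hF₀ hF₁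
  obtain ⟨n, hn, hFn⟩ := ih j hj (m + 1) hrel
  exact ⟨n, by omega, hFn⟩

end Greedy

theorem pursuer_forces_of_rel_general (G : GCR PP PE)
    (i : ℕ) (p : PP) (q : PE) (h : G.rel i q p) :
    ∃ σ : PStrat G, σ.MovesValid ∧ ∀ τ : EStrat G, τ.MovesValid →
      ∃ n, n ≤ 2 * i + 1 ∧
        G.F (posFrom G σ τ (p, q) false n).1 (posFrom G σ τ (p, q) false n).2 := by
  refine ⟨G.greedyStrat p, G.greedyStrat_movesValid p, fun τ hτ => ?_⟩
  obtain ⟨n, hn, hF⟩ := exists_final_posFrom_greedy G p (p, q) hτ i 0 h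
  exact ⟨n, by omega, hF⟩

/-- If it is the Evader's turn to move at position `(p,q)` and `q ≼_i p`, then the
Pursuer has a strategy guaranteeing that the position enters `F` after the Pursuer makes
at most `i` more moves (the Evader moves at the odd time-steps and the Pursuer at the
even time-steps, so by time-step `n` the Pursuer has made `n/2` moves). -/
theorem pursuer_forces_of_rel [Fintype PP] [Fintype PE] (G : GCR PP PE)
    (i : ℕ) (p : PP) (q : PE) (h : G.rel i q p) :
    ∃ σ : PStrat G, σ.MovesValid ∧ ∀ τ : EStrat G, τ.MovesValid →
      ∃ n, n ≤ 2 * i + 1 ∧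
        G.F (posFrom G σ τ (p, q) false n).1 (posFrom G σ τ (p, q) false n).2 :=
  pursuer_forces_of_rel_general G i p q h

end GCR
end

section
/- In a generalized Cops and Robbers game, the Pursuer has a winning strategy if and only if there exists a start position p_P ∈ I_P such that for every q_E ∈ I_E(p_P) the stable label of the state ((p_P, q_E), P) in the state digraph D_G is finite. -/
open Classical

namespace GCR

variable {PP PE : Type*}

/-! The states from which the Pursuer can force a final position within `m` moves form an
increasing sequence of attractors. By induction on `m`, the `m`-th iterate of the labelling is
finite exactly on the `m`-th attractor, so (the Evader having finitely many moves) a stable label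
is finite exactly on their union. From the `(m+1)`-st attractor the Pursuer can always move
into the `m`-th one, and doing so from a start whose responses all have finite label wins.
Conversely, every Pursuer move from a state outside the union stays outside, and the Evader
always has a move that stays outside as well, so it avoids `F` forever. -/

theorem _root_.Set.Nonempty.exists_mem_forall_of_monotone {α : Type*} {S : Set α}
    (hS : S.Nonempty) {Q : ℕ → α → Prop} (hQ : ∀ x, Monotone (Q · x)) :
    ∃ x ∈ S, ∀ m, (∃ y ∈ S, Q m y) → Q m x := by
  by_cases h : ∃ m, ∃ y ∈ S, Q m y
  · obtain ⟨x, hx, hQx⟩ := Nat.find_spec h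
    exact ⟨x, hx, fun m hm => hQ x (Nat.find_min' h hm) hQx⟩
  · exact ⟨hS.some, hS.some_mem, fun m hm => (h ⟨m, hm⟩).elim⟩

section
variable (G : GCR PP PE)

def ForcesWithin : ℕ → (PP × PE) × Bool → Prop
  | 0, (c, _) => G.F c.1 c.2
  | m + 1, (c, true) => G.F c.1 c.2 ∨ ∃ w ∈ G.AP c.1 c.2, ForcesWithin m ((w, c.2), false)
  | m + 1, (c, false) => G.F c.1 c.2 ∨ ∀ x ∈ G.AE c.1 c.2, ForcesWithin m ((c.1, x), true)

theorem forcesWithin_succ_of_forcesWithin {m : ℕ} {s : (PP × PE) × Bool}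
    (h : G.ForcesWithin m s) : G.ForcesWithin (m + 1) s := by
  induction m generalizing s with
  | zero => obtain ⟨c, _ | _⟩ := s <;> exact Or.inl h
  | succ m ih =>
    obtain ⟨c, _ | _⟩ := s
    · exact h.imp_right fun h x hx => ih (h x hx)
    · exact h.imp_right fun ⟨w, hw, h⟩ => ⟨w, hw, ih h⟩

theorem monotone_forcesWithin (s : (PP × PE) × Bool) : Monotone (G.ForcesWithin · s) :=
  monotone_nat_of_le_succ fun _ => G.forcesWithin_succ_of_forcesWithin

theorem iterate_labelStep_ne_top_iff [Finite PE] (m : ℕ) (s : (PP × PE) × Bool) :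
    G.labelStep^[m] G.labelInit s ≠ ⊤ ↔ G.ForcesWithin m s := by
  induction m generalizing s with
  | zero => by_cases hF : G.F s.1.1 s.1.2 <;> simp [labelInit, ForcesWithin, hF]
  | succ m ih =>
    rw [Function.iterate_succ_apply']
    obtain ⟨c, _ | _⟩ := s
    · by_cases hF : G.F c.1 c.2
      · simp [labelStep, ForcesWithin, hF]
      simp only [labelStep, ForcesWithin, hF, if_false, false_or, Bool.false_eq_true, ← ih,
        ne_eq, ENat.add_eq_top, ENat.one_ne_top, false_or]
      exact ⟨fun h x hx => ne_top_of_le_ne_top h (le_iSup₂_of_le x hx le_rfl),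
        fun h => iSup_ne_top fun x => iSup_ne_top fun hx => h x hx⟩
    · by_cases hF : G.F c.1 c.2
      · simp [labelStep, ForcesWithin, hF]
      simp [labelStep, ForcesWithin, hF, ← ih]

theorem label_ne_top_iff [Finite PE] (s : (PP × PE) × Bool) :
    G.label s ≠ ⊤ ↔ ∃ m, G.ForcesWithin m s := by
  simp only [label, ne_eq, iInf_eq_top, not_forall, ← G.iterate_labelStep_ne_top_iff]

theorem not_F_of_label_eq_top [Finite PE] {s : (PP × PE) × Bool} (h : G.label s = ⊤) :
    ¬ G.F s.1.1 s.1.2 :=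
  fun hF => (G.label_ne_top_iff s).2 ⟨0, hF⟩ h

theorem label_eq_top_of_mem_AP [Finite PE] {c : PP × PE} (h : G.label (c, true) = ⊤) {w : PP}
    (hw : w ∈ G.AP c.1 c.2) : G.label ((w, c.2), false) = ⊤ := by
  by_contra hw'
  obtain ⟨m, hm⟩ := (G.label_ne_top_iff _).1 hw'
  exact (G.label_ne_top_iff (c, true)).2 ⟨m + 1, Or.inr ⟨w, hw, hm⟩⟩ h

theorem exists_mem_AE_label_eq_top [Finite PE] {c : PP × PE} (h : G.label (c, false) = ⊤) :
    ∃ x ∈ G.AE c.1 c.2, G.label ((c.1, x), true) = ⊤ := by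
  by_contra! hx
  have : ∀ᶠ m in Filter.atTop, ∀ x ∈ G.AE c.1 c.2, G.ForcesWithin m ((c.1, x), true) := by
    refine (Filter.eventually_all_finite (Set.toFinite _)).2 fun x hxA => ?_
    obtain ⟨m, hm⟩ := (G.label_ne_top_iff _).1 (hx x hxA)
    exact Filter.eventually_atTop.2 ⟨m, fun _ hle => G.monotone_forcesWithin _ hle hm⟩
  obtain ⟨m, hm⟩ := this.exists
  exact (G.label_ne_top_iff (c, false)).2 ⟨m + 1, Or.inr hm⟩ h

theorem exists_pursuer_move : ∃ f : PP × PE → PP, ∀ c, ¬ G.F c.1 c.2 →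
    f c ∈ G.AP c.1 c.2 ∧
      ∀ m, G.ForcesWithin (m + 1) (c, true) → G.ForcesWithin m ((f c, c.2), false) := by
  have : ∀ c : PP × PE, ∃ w, ¬ G.F c.1 c.2 → w ∈ G.AP c.1 c.2 ∧
      ∀ m, G.ForcesWithin (m + 1) (c, true) → G.ForcesWithin m ((w, c.2), false) := by
    intro c
    by_cases hF : G.F c.1 c.2
    · exact ⟨c.1, fun h => (h hF).elim⟩
    obtain ⟨w, hw, hbest⟩ := (G.AP_nonempty _ _ hF).exists_mem_forall_of_monotone
      fun w => G.monotone_forcesWithin ((w, c.2), false)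
    exact ⟨w, fun _ => ⟨hw, fun m hm => hbest m (hm.resolve_left hF)⟩⟩
  choose f hf using this
  exact ⟨f, hf⟩

theorem exists_evader_move [Finite PE] : ∃ f : PP × PE → PE, ∀ c, ¬ G.F c.1 c.2 →
    f c ∈ G.AE c.1 c.2 ∧ (G.label (c, false) = ⊤ → G.label ((c.1, f c), true) = ⊤) := by
  have : ∀ c : PP × PE, ∃ x, ¬ G.F c.1 c.2 → x ∈ G.AE c.1 c.2 ∧
      (G.label (c, false) = ⊤ → G.label ((c.1, x), true) = ⊤) := by
    intro c
    by_cases hF : G.F c.1 c.2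
    · exact ⟨c.2, fun h => (h hF).elim⟩
    by_cases hsafe : G.label (c, false) = ⊤
    · obtain ⟨x, hx, hx'⟩ := G.exists_mem_AE_label_eq_top hsafe
      exact ⟨x, fun _ => ⟨hx, fun _ => hx'⟩⟩
    · obtain ⟨x, hx⟩ := G.AE_nonempty _ _ hF
      exact ⟨x, fun _ => ⟨hx, fun h => (hsafe h).elim⟩⟩
  choose f hf using this
  exact ⟨f, hf⟩

end

-- The default move for the empty history never occurs in a play.
def PStrat.positional {G : GCR PP PE} (p : PP) (f : PP × PE → PP) : PStrat G :=
  ⟨p, fun h => h.head?.elim p f⟩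

def EStrat.positional {G : GCR PP PE} (init : PP → PE) (q : PE) (f : PP × PE → PE) :
    EStrat G :=
  ⟨init, fun h => h.head?.elim q f⟩

section
variable (G : GCR PP PE) (σ : PStrat G) (τ : EStrat G)

def state (n : ℕ) : (PP × PE) × Bool := (G.pos σ τ n, decide (n % 2 = 0))

theorem play_snd_eq_cons (n : ℕ) : ∃ t, (G.play σ τ n).2 = G.pos σ τ n :: t := by
  cases n with
  | zero => exact ⟨[], rfl⟩
  | succ n => exact ⟨(G.play σ τ n).2, rfl⟩

theorem state_of_even {n : ℕ} (h : n % 2 = 0) : G.state σ τ n = (G.pos σ τ n, true) := by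
  simp [state, h]

theorem state_of_odd {n : ℕ} (h : n % 2 = 1) : G.state σ τ n = (G.pos σ τ n, false) := by
  simp [state, h]

theorem state_succ_of_even {n : ℕ} (h : n % 2 = 0) :
    G.state σ τ (n + 1) = ((σ.move (G.play σ τ n).2, (G.pos σ τ n).2), false) := by
  simp [state, pos, play, h, Nat.succ_mod_two_eq_one_iff.2 h]

theorem state_succ_of_odd {n : ℕ} (h : n % 2 = 1) :
    G.state σ τ (n + 1) = (((G.pos σ τ n).1, τ.move (G.play σ τ n).2), true) := by
  simp [state, pos, play, h, Nat.succ_mod_two_eq_zero_iff.2 h]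

end

section
variable (G : GCR PP PE)

theorem forcesWithin_state_succ {p : PP} {f : PP × PE → PP}
    (hf : ∀ c, ¬ G.F c.1 c.2 →
      ∀ m, G.ForcesWithin (m + 1) (c, true) → G.ForcesWithin m ((f c, c.2), false))
    {τ : EStrat G} (hτ : τ.MovesValid) {m n : ℕ}
    (hF : ¬ G.F (G.pos (.positional p f) τ n).1 (G.pos (.positional p f) τ n).2)
    (h : G.ForcesWithin (m + 1) (G.state (.positional p f) τ n)) :
    G.ForcesWithin m (G.state (.positional p f) τ (n + 1)) := by
  obtain ⟨t, ht⟩ := G.play_snd_eq_cons (.positional p f) τ n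
  rcases Nat.mod_two_eq_zero_or_one n with hn | hn
  · rw [G.state_of_even _ _ hn] at h
    rw [G.state_succ_of_even _ _ hn, ht]
    exact hf _ hF m h
  · rw [G.state_of_odd _ _ hn] at h
    rw [G.state_succ_of_odd _ _ hn]
    exact h.resolve_left hF _ (ht ▸ hτ t _ hF)

theorem exists_F_pos_of_forcesWithin_state {p : PP} {f : PP × PE → PP}
    (hf : ∀ c, ¬ G.F c.1 c.2 →
      ∀ m, G.ForcesWithin (m + 1) (c, true) → G.ForcesWithin m ((f c, c.2), false))
    {τ : EStrat G} (hτ : τ.MovesValid) {m n : ℕ}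
    (h : G.ForcesWithin m (G.state (.positional p f) τ n)) :
    ∃ k, G.F (G.pos (.positional p f) τ k).1 (G.pos (.positional p f) τ k).2 := by
  induction m generalizing n with
  | zero => exact ⟨n, h⟩
  | succ m ih =>
    by_cases hF : G.F (G.pos (.positional p f) τ n).1 (G.pos (.positional p f) τ n).2
    · exact ⟨n, hF⟩
    · exact ih (G.forcesWithin_state_succ hf hτ hF h)

theorem label_state_succ_eq_top [Finite PE] {σ : PStrat G} (hσ : σ.MovesValid)
    {init : PP → PE} {q : PE} {f : PP × PE → PE}
    (hf : ∀ c, ¬ G.F c.1 c.2 → G.label (c, false) = ⊤ → G.label ((c.1, f c), true) = ⊤)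
    {n : ℕ} (h : G.label (G.state σ (.positional init q f) n) = ⊤) :
    G.label (G.state σ (.positional init q f) (n + 1)) = ⊤ := by
  have hF := G.not_F_of_label_eq_top h
  obtain ⟨t, ht⟩ := G.play_snd_eq_cons σ (.positional init q f) n
  rcases Nat.mod_two_eq_zero_or_one n with hn | hn
  · rw [G.state_of_even _ _ hn] at h hF
    rw [G.state_succ_of_even _ _ hn]
    exact G.label_eq_top_of_mem_AP h (ht ▸ hσ t _ hF)
  · rw [G.state_of_odd _ _ hn] at h hF
    rw [G.state_succ_of_odd _ _ hn, ht]
    exact hf _ hF h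

theorem pursuerWins_of_label_ne_top [Finite PE] {p : PP} (hp : G.IP p)
    (h : ∀ q, G.IE p q → G.label ((p, q), true) ≠ ⊤) : G.PursuerWins := by
  obtain ⟨f, hf⟩ := G.exists_pursuer_move
  refine ⟨.positional p f, ⟨hp, fun t c hF => (hf c hF).1⟩, fun τ hτ => ?_⟩
  obtain ⟨m, hm⟩ := (G.label_ne_top_iff _).1 (h _ (hτ.1 p hp))
  exact G.exists_F_pos_of_forcesWithin_state (fun c hF => (hf c hF).2) hτ.2 (n := 0) hm

theorem exists_evader_avoids_F [Finite PE] {σ : PStrat G} (hσ : σ.MovesValid) {q : PE}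
    (hq : G.IE σ.init q) (h : G.label ((σ.init, q), true) = ⊤) :
    ∃ τ : EStrat G, τ.Valid ∧ ∀ n, ¬ G.F (G.pos σ τ n).1 (G.pos σ τ n).2 := by
  obtain ⟨f, hf⟩ := G.exists_evader_move
  let init : PP → PE := Function.update (fun p => if hp : G.IP p then hp.choose else q) σ.init q
  have hinit : ∀ p, G.IP p → G.IE p (init p) := by
    intro p hp
    by_cases hpσ : p = σ.init
    · subst hpσ
      simpa [init] using hq
    · simp only [init, Function.update_of_ne hpσ, dif_pos hp]
      exact hp.choose_spec
  have hsafe : ∀ n, G.label (G.state σ (.positional init q f) n) = ⊤ := by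
    intro n
    induction n with
    | zero =>
      change G.label ((σ.init, init σ.init), true) = ⊤
      simpa [init] using h
    | succ n ih => exact G.label_state_succ_eq_top hσ (fun c hF => (hf c hF).2) ih
  exact ⟨.positional init q f, ⟨hinit, fun t c hF => (hf c hF).1⟩,
    fun n => G.not_F_of_label_eq_top (hsafe n)⟩

end

theorem pursuerWins_iff_label_finite_general [Fintype PE] (G : GCR PP PE) :
    G.PursuerWins ↔
      ∃ p, G.IP p ∧ ∀ q, G.IE p q → G.label ((p, q), true) ≠ ⊤ := by
  constructor
  · rintro ⟨σ, ⟨hIP, hσ⟩, hwin⟩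
    refine ⟨σ.init, hIP, fun q hq hlabel => ?_⟩
    obtain ⟨τ, hτ, hτF⟩ := G.exists_evader_avoids_F hσ hq hlabel
    obtain ⟨n, hn⟩ := hwin τ hτ
    exact hτF n hn
  · rintro ⟨p, hp, hfin⟩
    exact G.pursuerWins_of_label_ne_top hp hfin

/-- The Pursuer has a winning strategy if and only if there is a start position
`p ∈ I_P` such that for every `q ∈ I_E(p)` the stable label of the Pursuer-to-move state
`((p,q),P)` in the state digraph is finite. -/
theorem pursuerWins_iff_label_finite [Fintype PP] [Fintype PE] (G : GCR PP PE) :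
    G.PursuerWins ↔
      ∃ p, G.IP p ∧ ∀ q, G.IE p q → G.label ((p, q), true) ≠ ⊤ :=
  pursuerWins_iff_label_finite_general G

end GCR
end

section
/- In a generalized Cops and Robbers game, for every state s of the state digraph D_G whose stable label is a finite number k, assuming both sides play optimally from state s, the game ends (the position first belongs to F) after exactly k moves; that is, the player to move at s can force the position into F within k moves, and the opposing player can ensure the position does not enter F in fewer than k moves. -/
open Classical

/-! In the well-ordered `ℕ∞` the label iterates decrease to their infimum in finitely many steps
at every state. The infimum commutes with the Pursuer's minimum, and with the Evader's maximum
because `PE` is finite, so the stable labelling satisfies the update equations. The label is then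
a potential for the play: if the Pursuer always moves to an out-neighbour of minimal label, every
move lowers the label by at least one, and if the Evader always moves to an out-neighbour of
maximal label, every move lowers it by at most one. -/

open Filter

theorem Antitone.eventually_eq_iInf {α : Type*} [CompleteLinearOrder α] [WellFoundedLT α]
    {a : ℕ → α} (ha : Antitone a) : ∀ᶠ n in atTop, a n = ⨅ m, a m := by
  obtain ⟨N, hN⟩ := ciInf_mem a
  exact eventually_atTop.2 ⟨N, fun n hn => le_antisymm (hN ▸ ha hn) (iInf_le a n)⟩

theorem ENat.exists_le_of_add_one_le_of_not {P : ℕ → Prop} {V : ℕ → ℕ∞} {k : ℕ}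
    (h0 : V 0 ≤ k) (hstep : ∀ n, ¬ P n → V (n + 1) + 1 ≤ V n) : ∃ n ≤ k, P n := by
  by_contra! hP
  have hdecay : ∀ n ≤ k + 1, V n + n ≤ k := by
    intro n hn
    induction n with
    | zero => simpa using h0
    | succ n ih =>
      calc V (n + 1) + (n + 1 : ℕ) = V (n + 1) + 1 + n := by push_cast; ring
        _ ≤ V n + n := by gcongr; exact hstep n (hP n (by omega))
        _ ≤ k := ih (by omega)
  have := (le_add_self).trans (hdecay (k + 1) le_rfl)
  norm_cast at this
  omega

theorem ENat.forall_lt_not_of_le_add_one_of_not {P : ℕ → Prop} {V : ℕ → ℕ∞} {k : ℕ}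
    (h0 : k ≤ V 0) (hstep : ∀ n, ¬ P n → V n ≤ V (n + 1) + 1)
    (hzero : ∀ n, P n → V n = 0) :
    ∀ n < k, ¬ P n := by
  have hnot : ∀ n, k ≤ V n + n → n < k → ¬ P n := by
    intro n hn hnk hPn
    rw [hzero n hPn, zero_add] at hn
    exact hnk.not_ge (by exact_mod_cast hn)
  have hgrowth : ∀ n ≤ k, k ≤ V n + n := by
    intro n hn
    induction n with
    | zero => simpa using h0
    | succ n ih =>
      calc (k : ℕ∞) ≤ V n + n := ih (by omega)
        _ ≤ V (n + 1) + 1 + n := by gcongr; exact hstep n (hnot n (ih (by omega)) (by omega))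
        _ = V (n + 1) + (n + 1 : ℕ) := by push_cast; ring
  exact fun n hnk => hnot n (hgrowth n hnk.le) hnk

namespace GCR

variable {PP PE : Type*}

section Label

variable (G : GCR PP PE)

theorem labelStep_mono : Monotone G.labelStep := by
  intro f g hfg t
  unfold labelStep
  split_ifs
  · exact le_rfl
  · gcongr with w _; exact hfg _
  · gcongr with x _; exact hfg _

theorem labelStep_le_labelInit (f : (PP × PE) × Bool → ℕ∞) :
    G.labelStep f ≤ G.labelInit := by
  intro t
  unfold labelStep labelInit
  split_ifs <;> simp

theorem antitone_iterate_labelStep : Antitone fun n => G.labelStep^[n] G.labelInit :=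
  G.labelStep_mono.antitone_iterate_of_map_le (G.labelStep_le_labelInit _)

theorem labelStep_of_final {f : (PP × PE) × Bool → ℕ∞} {c : PP × PE} (hc : G.F c.1 c.2)
    (b : Bool) : G.labelStep f (c, b) = 0 := by
  simp [labelStep, hc]

theorem labelStep_pursuer_turn {f : (PP × PE) × Bool → ℕ∞} {c : PP × PE}
    (hc : ¬ G.F c.1 c.2) :
    G.labelStep f (c, true) = 1 + ⨅ w ∈ G.AP c.1 c.2, f ((w, c.2), false) := by
  simp [labelStep, hc]

theorem labelStep_evader_turn {f : (PP × PE) × Bool → ℕ∞} {c : PP × PE}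
    (hc : ¬ G.F c.1 c.2) :
    G.labelStep f (c, false) = 1 + ⨆ x ∈ G.AE c.1 c.2, f ((c.1, x), true) := by
  simp [labelStep, hc]

theorem label_le_iterate (n : ℕ) : G.label ≤ G.labelStep^[n] G.labelInit :=
  fun _ => iInf_le _ n

theorem eventually_iterate_eq_label (t : (PP × PE) × Bool) :
    ∀ᶠ n in atTop, G.labelStep^[n] G.labelInit t = G.label t :=
  Antitone.eventually_eq_iInf fun _ _ hmn => G.antitone_iterate_labelStep hmn t

theorem labelStep_label_le : G.labelStep G.label ≤ G.label := fun t =>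
  le_iInf fun n => by
    cases n with
    | zero => exact G.labelStep_le_labelInit _ t
    | succ n =>
      rw [Function.iterate_succ_apply']
      exact G.labelStep_mono (G.label_le_iterate n) t

theorem label_le_labelStep_label [Finite PE] : G.label ≤ G.labelStep G.label := by
  rintro ⟨c, b⟩
  have hsucc (n : ℕ) : G.label (c, b) ≤ G.labelStep (G.labelStep^[n] G.labelInit) (c, b) := by
    rw [← Function.iterate_succ_apply' G.labelStep]
    exact G.label_le_iterate (n + 1) _
  by_cases hF : G.F c.1 c.2
  · simpa [G.labelStep_of_final hF] using hsucc 0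
  cases b
  · obtain ⟨n, hn⟩ :=
      (eventually_all.2 fun x : PE => G.eventually_iterate_eq_label ((c.1, x), true)).exists
    calc G.label (c, false) ≤ _ := hsucc n
      _ = G.labelStep G.label (c, false) := by simp only [G.labelStep_evader_turn hF, hn]
  · have hmono :
        Antitone fun n => ⨅ w ∈ G.AP c.1 c.2, G.labelStep^[n] G.labelInit ((w, c.2), false) :=
      fun _ _ hmn => iInf₂_mono fun _ _ => G.antitone_iterate_labelStep hmn _
    obtain ⟨n, hn⟩ := hmono.eventually_eq_iInf.exists
    calc G.label (c, true) ≤ _ := hsucc n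
      _ = G.labelStep G.label (c, true) := by
        simp only [G.labelStep_pursuer_turn hF, hn, label, iInf_comm (ι := ℕ)]

theorem labelStep_label [Finite PE] : G.labelStep G.label = G.label :=
  le_antisymm G.labelStep_label_le G.label_le_labelStep_label

theorem label_of_final {c : PP × PE} (hc : G.F c.1 c.2) (b : Bool) : G.label (c, b) = 0 :=
  nonpos_iff_eq_zero.1 <| (iInf_le _ 0).trans (by simp [labelInit, hc])

theorem label_pursuer_turn [Finite PE] {c : PP × PE} (hc : ¬ G.F c.1 c.2) :
    G.label (c, true) = 1 + ⨅ w ∈ G.AP c.1 c.2, G.label ((w, c.2), false) := by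
  rw [← G.labelStep_pursuer_turn hc, G.labelStep_label]

theorem label_evader_turn [Finite PE] {c : PP × PE} (hc : ¬ G.F c.1 c.2) :
    G.label (c, false) = 1 + ⨆ x ∈ G.AE c.1 c.2, G.label ((c.1, x), true) := by
  rw [← G.labelStep_evader_turn hc, G.labelStep_label]

end Label

section Play

variable (G : GCR PP PE)

noncomputable def greedyPursuer (p₀ : PP) : PStrat G where
  init := p₀
  move
    | [] => p₀
    | c :: _ => if hc : G.F c.1 c.2 then c.1 else
        Function.argminOn (fun w => G.label ((w, c.2), false)) (G.AP c.1 c.2) (G.AP_nonempty _ _ hc)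

theorem greedyPursuer_move {p₀ : PP} {c : PP × PE} (hc : ¬ G.F c.1 c.2) (h : List (PP × PE)) :
    (G.greedyPursuer p₀).move (c :: h) ∈ G.AP c.1 c.2 ∧
      ∀ w ∈ G.AP c.1 c.2,
        G.label (((G.greedyPursuer p₀).move (c :: h), c.2), false) ≤
          G.label ((w, c.2), false) := by
  simp only [greedyPursuer, dif_neg hc]
  exact ⟨Function.argminOn_mem .., fun w hw =>
    Function.argminOn_le (fun w => G.label ((w, c.2), false)) _ hw⟩

theorem greedyPursuer_movesValid (p₀ : PP) : (G.greedyPursuer p₀).MovesValid :=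
  fun h _ hc => (G.greedyPursuer_move hc h).1

theorem exists_evader_move_max_label [Finite PE] {c : PP × PE} (hc : ¬ G.F c.1 c.2) :
    ∃ x ∈ G.AE c.1 c.2, ∀ y ∈ G.AE c.1 c.2,
      G.label ((c.1, y), true) ≤ G.label ((c.1, x), true) :=
  Set.exists_max_image _ _ (Set.toFinite _) (G.AE_nonempty _ _ hc)

noncomputable def greedyEvader [Finite PE] (q₀ : PE) : EStrat G where
  init _ := q₀
  move
    | [] => q₀
    | c :: _ => if hc : G.F c.1 c.2 then c.2 else (G.exists_evader_move_max_label hc).choose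

theorem greedyEvader_move [Finite PE] {q₀ : PE} {c : PP × PE} (hc : ¬ G.F c.1 c.2)
    (h : List (PP × PE)) :
    (G.greedyEvader q₀).move (c :: h) ∈ G.AE c.1 c.2 ∧
      ∀ x ∈ G.AE c.1 c.2,
        G.label ((c.1, x), true) ≤
          G.label ((c.1, (G.greedyEvader q₀).move (c :: h)), true) := by
  simp only [greedyEvader, dif_neg hc]
  exact (G.exists_evader_move_max_label hc).choose_spec

theorem greedyEvader_movesValid [Finite PE] (q₀ : PE) : (G.greedyEvader q₀).MovesValid :=
  fun h _ hc => (G.greedyEvader_move hc h).1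

variable {G}

def stateFrom (σ : PStrat G) (τ : EStrat G) (s : (PP × PE) × Bool) (n : ℕ) :
    (PP × PE) × Bool :=
  (G.posFrom σ τ s.1 s.2 n, decide (n % 2 = 0) == s.2)

theorem stateFrom_zero (σ : PStrat G) (τ : EStrat G) (s : (PP × PE) × Bool) :
    stateFrom σ τ s 0 = s := by
  obtain ⟨c, _ | _⟩ := s <;> rfl

theorem turn_succ (n : ℕ) (b : Bool) :
    (decide ((n + 1) % 2 = 0) == b) = !(decide (n % 2 = 0) == b) := by
  rcases Nat.mod_two_eq_zero_or_one n with h | h <;> cases b <;>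
    simp [h, Nat.succ_mod_two_eq_zero_iff]

theorem playFrom_snd (σ : PStrat G) (τ : EStrat G) (start : PP × PE) (b : Bool) (n : ℕ) :
    (G.playFrom σ τ start b n).2 =
      G.posFrom σ τ start b n :: (G.playFrom σ τ start b n).2.tail := by
  cases n <;> rfl

theorem stateFrom_succ_of_pursuer_turn {σ : PStrat G} {τ : EStrat G} {s : (PP × PE) × Bool}
    {n : ℕ} {c : PP × PE} (h : stateFrom σ τ s n = (c, true)) :
    ∃ hist, stateFrom σ τ s (n + 1) = ((σ.move (c :: hist), c.2), false) := by
  obtain ⟨hpos, hturn⟩ := Prod.mk.inj h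
  refine ⟨(G.playFrom σ τ s.1 s.2 n).2.tail, ?_⟩
  simp only [stateFrom] at hpos hturn ⊢
  rw [turn_succ, hturn, posFrom, playFrom, ← posFrom, playFrom_snd, hpos]
  simp [hturn]

theorem stateFrom_succ_of_evader_turn {σ : PStrat G} {τ : EStrat G} {s : (PP × PE) × Bool}
    {n : ℕ} {c : PP × PE} (h : stateFrom σ τ s n = (c, false)) :
    ∃ hist, stateFrom σ τ s (n + 1) = ((c.1, τ.move (c :: hist)), true) := by
  obtain ⟨hpos, hturn⟩ := Prod.mk.inj h
  refine ⟨(G.playFrom σ τ s.1 s.2 n).2.tail, ?_⟩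
  simp only [stateFrom] at hpos hturn ⊢
  rw [turn_succ, hturn, posFrom, playFrom, ← posFrom, playFrom_snd, hpos]
  simp [hturn]

variable [Finite PE]

theorem label_stateFrom_succ_add_one_le_of_greedyPursuer {p₀ : PP} {τ : EStrat G}
    (hτ : τ.MovesValid) {s : (PP × PE) × Bool} {n : ℕ}
    (hF : ¬ G.F (stateFrom (G.greedyPursuer p₀) τ s n).1.1
      (stateFrom (G.greedyPursuer p₀) τ s n).1.2) :
    G.label (stateFrom (G.greedyPursuer p₀) τ s (n + 1)) + 1 ≤
      G.label (stateFrom (G.greedyPursuer p₀) τ s n) := by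
  rcases h : stateFrom (G.greedyPursuer p₀) τ s n with ⟨c, _ | _⟩ <;> rw [h] at hF
  · obtain ⟨hist, hnext⟩ := stateFrom_succ_of_evader_turn h
    rw [hnext, G.label_evader_turn hF, add_comm]
    gcongr
    exact le_iSup₂_of_le (f := fun x _ => G.label ((c.1, x), true)) _ (hτ hist c hF) le_rfl
  · obtain ⟨hist, hnext⟩ := stateFrom_succ_of_pursuer_turn h
    rw [hnext, G.label_pursuer_turn hF, add_comm]
    gcongr
    exact le_iInf₂ (G.greedyPursuer_move hF hist).2

theorem label_stateFrom_le_succ_add_one_of_greedyEvader {q₀ : PE} {σ : PStrat G}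
    (hσ : σ.MovesValid) {s : (PP × PE) × Bool} {n : ℕ}
    (hF : ¬ G.F (stateFrom σ (G.greedyEvader q₀) s n).1.1
      (stateFrom σ (G.greedyEvader q₀) s n).1.2) :
    G.label (stateFrom σ (G.greedyEvader q₀) s n) ≤
      G.label (stateFrom σ (G.greedyEvader q₀) s (n + 1)) + 1 := by
  rcases h : stateFrom σ (G.greedyEvader q₀) s n with ⟨c, _ | _⟩ <;> rw [h] at hF
  · obtain ⟨hist, hnext⟩ := stateFrom_succ_of_evader_turn h
    rw [hnext, G.label_evader_turn hF, add_comm]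
    gcongr
    exact iSup₂_le (G.greedyEvader_move hF hist).2
  · obtain ⟨hist, hnext⟩ := stateFrom_succ_of_pursuer_turn h
    rw [hnext, G.label_pursuer_turn hF, add_comm]
    gcongr
    exact iInf₂_le_of_le (f := fun w _ => G.label ((w, c.2), false)) _ (hσ hist c hF) le_rfl

end Play

theorem game_ends_in_label_moves_general [Fintype PE] (G : GCR PP PE)
    (s : (PP × PE) × Bool) (k : ℕ) (h : G.label s = (k : ℕ∞)) :
    (∃ σ : PStrat G, σ.MovesValid ∧ ∀ τ : EStrat G, τ.MovesValid →
        ∃ n, n ≤ k ∧ G.F (posFrom G σ τ s.1 s.2 n).1 (posFrom G σ τ s.1 s.2 n).2) ∧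
    (∃ τ : EStrat G, τ.MovesValid ∧ ∀ σ : PStrat G, σ.MovesValid →
        ∀ n, n < k → ¬ G.F (posFrom G σ τ s.1 s.2 n).1 (posFrom G σ τ s.1 s.2 n).2) := by
  refine ⟨⟨G.greedyPursuer s.1.1, G.greedyPursuer_movesValid _, fun τ hτ => ?_⟩,
    ⟨G.greedyEvader s.1.2, G.greedyEvader_movesValid _, fun σ hσ => ?_⟩⟩
  · exact ENat.exists_le_of_add_one_le_of_not (V := fun n => G.label (stateFrom _ τ s n))
      (by simp [stateFrom_zero, h])
      fun _ hF => label_stateFrom_succ_add_one_le_of_greedyPursuer hτ hF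
  · exact ENat.forall_lt_not_of_le_add_one_of_not (V := fun n => G.label (stateFrom σ _ s n))
      (by simp [stateFrom_zero, h])
      (fun _ hF => label_stateFrom_le_succ_add_one_of_greedyEvader hσ hF)
      fun _ hF => G.label_of_final hF _

/-- If the stable label of a state `s` is a finite number `k`, then assuming both sides
play optimally from `s` the game ends (the position first belongs to `F`) after exactly
`k` single moves: the Pursuer can force the position into `F` within `k` moves, and the
Evader can ensure the position does not enter `F` in fewer than `k` moves. -/
theorem game_ends_in_label_moves [Fintype PP] [Fintype PE] (G : GCR PP PE)
    (s : (PP × PE) × Bool) (k : ℕ) (h : G.label s = (k : ℕ∞)) :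
    (∃ σ : PStrat G, σ.MovesValid ∧ ∀ τ : EStrat G, τ.MovesValid →
        ∃ n, n ≤ k ∧ G.F (posFrom G σ τ s.1 s.2 n).1 (posFrom G σ τ s.1 s.2 n).2) ∧
    (∃ τ : EStrat G, τ.MovesValid ∧ ∀ σ : PStrat G, σ.MovesValid →
        ∀ n, n < k → ¬ G.F (posFrom G σ τ s.1 s.2 n).1 (posFrom G σ τ s.1 s.2 n).2) :=
  game_ends_in_label_moves_general G s k h

end GCR
end
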